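/- arXiv:2103.11347 — 7 statements merged into one kernel-verified Lean document; each statement's English description precedes it below -/
import Mathlib

section
/- Let 0 < c < 1 and consider the elliptical billiard table 𝒯 with boundary C = {(x,y) ∈ ℝ² : x² + y²/(1−c²) = 1} and foci F₁ = (−c,0), F₂ = (c,0). Let p₁, p₂ ∈ 𝒯 and assume it is not the case that both p₁ and p₂ belong to {F₁, F₂}. Then for every integer n ≥ 1 there exists a billiard trajectory from p₁ to p₂ with exactly n bounces; that is, there exist points x₁, …, x_n ∈ C with x₁ ≠ p₁, x_n ≠ p₂ and x_{j+1} ≠ x_j for 1 ≤ j ≤ n−1, such that, setting u₀ = (x₁ − p₁)/‖x₁ − p₁‖, u_j = (x_{j+1} − x_j)/‖x_{j+1} − x_j‖ for 1 ≤ j ≤ n−1, and u_n = (p₂ − x_n)/‖p₂ − x_n‖, the reflection law u_j = u_{j−1} − 2⟨u_{j−1}, ν(x_j)⟩·ν(x_j) holds for every 1 ≤ j ≤ n. -/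
noncomputable section

/-- The Euclidean inner product on `ℝ × ℝ`. -/
def ip (v w : ℝ × ℝ) : ℝ := v.1 * w.1 + v.2 * w.2

/-- The Euclidean norm on `ℝ × ℝ`. -/
def nrm (v : ℝ × ℝ) : ℝ := Real.sqrt (ip v v)

/-- The boundary ellipse `C = {(x,y) : x² + y²/(1−c²) = 1}`. -/
def ellipseC (c : ℝ) : Set (ℝ × ℝ) := {q | q.1 ^ 2 + q.2 ^ 2 / (1 - c ^ 2) = 1}

/-- The closed billiard table `𝒯`. -/
def tableT (c : ℝ) : Set (ℝ × ℝ) := {q | q.1 ^ 2 + q.2 ^ 2 / (1 - c ^ 2) ≤ 1}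

/-- The outward unit normal to `C` at `q`: the unit vector in the direction of
`(q₁, q₂/(1−c²))`. -/
def nuC (c : ℝ) (q : ℝ × ℝ) : ℝ × ℝ :=
  (nrm (q.1, q.2 / (1 - c ^ 2)))⁻¹ • (q.1, q.2 / (1 - c ^ 2))

/-- `p` is one of the two foci `(±c, 0)` of the ellipse. -/
def IsFocus (c : ℝ) (p : ℝ × ℝ) : Prop := p = (c, 0) ∨ p = (-c, 0)

/-! Among all polygons `p₁ x₁ … xₙ p₂` with vertices `xⱼ ∈ C`, take one of maximal length
(`C` is compact). Then each `xⱼ` maximizes `y ↦ ‖y - xⱼ₋₁‖ + ‖xⱼ₊₁ - y‖` on `C`.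
The table is strictly convex, so a point of `C` never lies on a segment between two other
points of the table; hence the triangle inequality is strict there, which forces
`xⱼ ≠ xⱼ₋₁, xⱼ₊₁`. Differentiating along a curve in `C` through `xⱼ`, the unit incoming
and outgoing directions have the same tangential component; in the plane this leaves either
equal directions (excluded again by strict convexity) or the reflection law. -/

open WithLp
open scoped InnerProductSpace

-- `ℝ × ℝ` carries the sup norm; its Euclidean structure is that of `WithLp 2 (ℝ × ℝ)`.
lemma ip_eq_inner (v w : ℝ × ℝ) : ip v w = ⟪toLp 2 v, toLp 2 w⟫_ℝ := by
  simp [ip, mul_comm]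

lemma nrm_eq_norm (v : ℝ × ℝ) : nrm v = ‖toLp 2 v‖ := by
  rw [nrm, ip_eq_inner, real_inner_self_eq_norm_sq, Real.sqrt_sq (norm_nonneg _)]

lemma nrm_zero : nrm 0 = 0 := by simp [nrm, ip]

lemma nrm_nonneg (v : ℝ × ℝ) : 0 ≤ nrm v := Real.sqrt_nonneg _

lemma nrm_pos {v : ℝ × ℝ} (hv : v ≠ 0) : 0 < nrm v := by
  simpa [nrm_eq_norm] using hv

lemma nrm_sq (v : ℝ × ℝ) : nrm v ^ 2 = ip v v :=
  Real.sq_sqrt (add_nonneg (mul_self_nonneg _) (mul_self_nonneg _))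

lemma ip_self_pos {v : ℝ × ℝ} (hv : v ≠ 0) : 0 < ip v v := by
  rw [← nrm_sq]; exact pow_pos (nrm_pos hv) 2

lemma continuous_nrm : Continuous nrm := by
  unfold nrm ip; fun_prop

lemma nrm_add_lt_of_not_sameRay {v w : ℝ × ℝ} (h : ¬SameRay ℝ v w) :
    nrm (v + w) < nrm v + nrm w := by
  simp only [nrm_eq_norm, toLp_add]
  exact norm_add_lt_of_not_sameRay fun h' =>
    h (h'.map (WithLp.linearEquiv 2 ℝ (ℝ × ℝ)).toLinearMap)

theorem HasDerivAt.nrm {f : ℝ → ℝ × ℝ} {f' : ℝ × ℝ} {t : ℝ} (hf : HasDerivAt f f' t)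
    (h0 : f t ≠ 0) : HasDerivAt (fun s => nrm (f s)) (ip (f t) f' / nrm (f t)) t := by
  have hL : HasDerivAt (fun s => toLp 2 (f s)) (toLp 2 f') t :=
    (WithLp.prodContinuousLinearEquiv 2 ℝ ℝ ℝ).symm.hasFDerivAt.comp_hasDerivAt t hf
  have hsq := hL.norm_sq.sqrt (by simpa using h0)
  simp only [Real.sqrt_sq (norm_nonneg _)] at hsq
  convert hsq using 1
  · ext s; exact nrm_eq_norm _
  · rw [ip_eq_inner, nrm_eq_norm]; ring

def unitVec (v : ℝ × ℝ) : ℝ × ℝ := (nrm v)⁻¹ • v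

lemma nrm_smul_unitVec (v : ℝ × ℝ) : nrm v • unitVec v = v := by
  rcases eq_or_ne v 0 with rfl | hv
  · simp [unitVec]
  · rw [unitVec, smul_smul, mul_inv_cancel₀ (nrm_pos hv).ne', one_smul]

lemma ip_unitVec_self {v : ℝ × ℝ} (hv : v ≠ 0) : ip (unitVec v) (unitVec v) = 1 := by
  have h : ip (unitVec v) (unitVec v) = (nrm v)⁻¹ ^ 2 * ip v v := by
    simp only [unitVec, ip, Prod.smul_fst, Prod.smul_snd, smul_eq_mul]; ring
  rw [h, ← nrm_sq, ← mul_pow, inv_mul_cancel₀ (nrm_pos hv).ne', one_pow]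

lemma sameRay_of_unitVec_eq {v w : ℝ × ℝ} (h : unitVec v = unitVec w) : SameRay ℝ v w := by
  rw [← nrm_smul_unitVec v, ← nrm_smul_unitVec w, h]
  exact (SameRay.rfl.nonneg_smul_left (nrm_nonneg v)).nonneg_smul_right (nrm_nonneg w)

lemma eq_ip_smul_of_ip_eq_zero {d N τ : ℝ × ℝ} (hN : ip N N = 1) (hd : ip d τ = 0)
    (hNτ : ip N τ = 0) (hτ : τ ≠ 0) : d = ip d N • N := by
  have hτ2 := (ip_self_pos hτ).ne'
  simp only [ip] at hN hd hNτ hτ2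
  have hcross : d.1 * N.2 - d.2 * N.1 = 0 := by
    refine (mul_eq_zero.1 ?_).resolve_right hτ2
    linear_combination (N.2 * τ.1 - N.1 * τ.2) * hd - (d.2 * τ.1 - d.1 * τ.2) * hNτ
  ext <;> simp only [ip, Prod.smul_fst, Prod.smul_snd, smul_eq_mul]
  · linear_combination -d.1 * hN + N.2 * hcross
  · linear_combination -d.2 * hN - N.1 * hcross

lemma eq_or_eq_reflection {u w N : ℝ × ℝ} (hu : ip u u = 1) (hw : ip w w = 1)
    (hN : ip N N = 1) (h : u - w = ip (u - w) N • N) : w = u ∨ w = u - (2 * ip u N) • N := by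
  set μ := ip (u - w) N
  have hw' : w = u - μ • N := by rw [← h, sub_sub_cancel]
  have hμ : μ * (μ - 2 * ip u N) = 0 := by
    rw [hw'] at hw
    simp only [ip, Prod.fst_sub, Prod.snd_sub, Prod.smul_fst, Prod.smul_snd, smul_eq_mul]
      at hu hw hN ⊢
    linear_combination hw - hu - μ ^ 2 * hN
  rcases mul_eq_zero.1 hμ with h0 | h0
  · left; rw [hw', h0, zero_smul, sub_zero]
  · right; rw [hw', sub_eq_zero.1 h0]

lemma ip_unitVec_sub_unitVec_eq_zero_of_isMaxOn {S : Set (ℝ × ℝ)} {γ : ℝ → ℝ × ℝ}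
    {a b x τ : ℝ × ℝ} (hγ : HasDerivAt γ τ 0) (hγx : γ 0 = x) (hγS : ∀ t, γ t ∈ S)
    (hxa : x ≠ a) (hxb : x ≠ b) (hmax : IsMaxOn (fun y => nrm (y - a) + nrm (b - y)) S x) :
    ip (unitVec (x - a) - unitVec (b - x)) τ = 0 := by
  subst hγx
  have hloc : IsLocalMax (fun t => nrm (γ t - a) + nrm (b - γ t)) 0 :=
    Filter.Eventually.of_forall fun t => hmax (hγS t)
  have h := hloc.hasDerivAt_eq_zero (((hγ.sub_const a).nrm (sub_ne_zero.2 hxa)).fun_add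
    ((hγ.const_sub b).nrm (sub_ne_zero.2 hxb.symm)))
  simp only [unitVec, ip, Prod.fst_sub, Prod.snd_sub, Prod.smul_fst, Prod.smul_snd,
    Prod.fst_neg, Prod.snd_neg, smul_eq_mul] at h ⊢
  linear_combination h

def ellipseForm (c : ℝ) (v : ℝ × ℝ) : ℝ := v.1 ^ 2 + v.2 ^ 2 / (1 - c ^ 2)

section ellipse

variable {c : ℝ}

lemma ellipseForm_smul_add_smul {s t : ℝ} (hst : s + t = 1) (a b : ℝ × ℝ) :
    ellipseForm c (s • a + t • b)
      = s * ellipseForm c a + t * ellipseForm c b - s * t * ellipseForm c (a - b) := by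
  obtain rfl : t = 1 - s := by linarith
  simp only [ellipseForm, Prod.fst_add, Prod.snd_add, Prod.smul_fst, Prod.smul_snd,
    Prod.fst_sub, Prod.snd_sub, smul_eq_mul]
  ring

lemma ellipseForm_pos (hc : c ^ 2 < 1) {v : ℝ × ℝ} (hv : v ≠ 0) : 0 < ellipseForm c v := by
  have hd : 0 < 1 - c ^ 2 := sub_pos.2 hc
  unfold ellipseForm
  rcases ne_or_eq v.1 0 with h₁ | h₁
  · positivity
  · have h₂ : v.2 ≠ 0 := fun h₂ => hv (Prod.ext h₁ h₂)
    positivity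

lemma ne_zero_of_mem_ellipseC {x : ℝ × ℝ} (hx : x ∈ ellipseC c) : x ≠ 0 := by
  rintro rfl; simp [ellipseC] at hx

lemma eq_of_mem_ellipseC_of_mem_openSegment (hc : c ^ 2 < 1) {a b y : ℝ × ℝ}
    (ha : a ∈ tableT c) (hb : b ∈ tableT c) (hy : y ∈ ellipseC c)
    (hseg : y ∈ openSegment ℝ a b) : a = b := by
  obtain ⟨s, t, hs, ht, hst, rfl⟩ := hseg
  by_contra hab
  have hQ := ellipseForm_pos hc (sub_ne_zero.2 hab)
  have hy' : ellipseForm c (s • a + t • b) = 1 := hy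
  rw [ellipseForm_smul_add_smul hst] at hy'
  nlinarith [mul_le_mul_of_nonneg_left (show ellipseForm c a ≤ 1 from ha) hs.le,
    mul_le_mul_of_nonneg_left (show ellipseForm c b ≤ 1 from hb) ht.le,
    mul_pos (mul_pos hs ht) hQ]

lemma not_sameRay_of_mem_ellipseC (hc : c ^ 2 < 1) {a b y : ℝ × ℝ} (ha : a ∈ tableT c)
    (hb : b ∈ tableT c) (hy : y ∈ ellipseC c) (hya : y ≠ a) (hyb : y ≠ b) :
    ¬SameRay ℝ (y - a) (b - y) := by
  intro h
  have hseg := mem_openSegment_of_ne_left_right hya.symm hyb.symm (mem_segment_iff_sameRay.2 h)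
  obtain rfl := eq_of_mem_ellipseC_of_mem_openSegment hc ha hb hy hseg
  rw [openSegment_same] at hseg
  exact hya hseg

lemma exists_mem_ellipseC_ne (hc : c ^ 2 < 1) (a b : ℝ × ℝ) :
    ∃ y ∈ ellipseC c, y ≠ a ∧ y ≠ b := by
  by_contra! h
  have hd : 0 < 1 - c ^ 2 := sub_pos.2 hc
  have h₁ := h (1, 0) (by simp [ellipseC])
  have h₂ := h (-1, 0) (by simp [ellipseC])
  have h₃ := h (0, √(1 - c ^ 2)) (by simp [ellipseC, Real.sq_sqrt hd.le, hd.ne'])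
  grind

lemma isCompact_ellipseC (hc : c ^ 2 < 1) : IsCompact (ellipseC c) := by
  have hd : 0 < 1 - c ^ 2 := sub_pos.2 hc
  refine (isCompact_Icc (a := ((-1, -1) : ℝ × ℝ)) (b := (1, 1))).of_isClosed_subset ?_ ?_
  · exact isClosed_eq (by fun_prop) continuous_const
  · intro v (hv : v.1 ^ 2 + v.2 ^ 2 / (1 - c ^ 2) = 1)
    have hv₂ : v.2 ^ 2 ≤ v.2 ^ 2 / (1 - c ^ 2) :=
      (le_div_iff₀ hd).2 (by nlinarith [sq_nonneg v.2, sq_nonneg c])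
    have h₁ := abs_le.1 ((sq_le_one_iff_abs_le_one v.1).1 (by nlinarith [sq_nonneg v.2]))
    have h₂ := abs_le.1 ((sq_le_one_iff_abs_le_one v.2).1 (by nlinarith [sq_nonneg v.1]))
    exact ⟨⟨h₁.1, h₂.1⟩, ⟨h₁.2, h₂.2⟩⟩

/-- The quarter turn of `x` transported from the unit circle by `(u, v) ↦ (u, √(1-c²) v)`:
a semi-diameter conjugate to `x`, so `t ↦ cos t • x + sin t • ellipseTangent c x` stays on `C`. -/
def ellipseTangent (c : ℝ) (x : ℝ × ℝ) : ℝ × ℝ := (-(x.2 / √(1 - c ^ 2)), √(1 - c ^ 2) * x.1)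

lemma ellipseForm_cos_smul_add_sin_smul_ellipseTangent (hc : c ^ 2 < 1) (x : ℝ × ℝ) (t : ℝ) :
    ellipseForm c (Real.cos t • x + Real.sin t • ellipseTangent c x) = ellipseForm c x := by
  have hd : 0 < 1 - c ^ 2 := sub_pos.2 hc
  have hβ : √(1 - c ^ 2) ^ 2 = 1 - c ^ 2 := Real.sq_sqrt hd.le
  have hβ0 : √(1 - c ^ 2) ≠ 0 := (Real.sqrt_pos.2 hd).ne'
  simp only [ellipseForm, ellipseTangent, Prod.fst_add, Prod.snd_add, Prod.smul_fst,
    Prod.smul_snd, smul_eq_mul]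
  generalize √(1 - c ^ 2) = β at hβ hβ0 ⊢
  rw [← hβ]
  field_simp
  linear_combination (x.1 ^ 2 * β ^ 2 + x.2 ^ 2) * Real.sin_sq_add_cos_sq t

lemma ip_nuC_ellipseTangent (hc : c ^ 2 < 1) (x : ℝ × ℝ) :
    ip (nuC c x) (ellipseTangent c x) = 0 := by
  have hd : 0 < 1 - c ^ 2 := sub_pos.2 hc
  have hβ : √(1 - c ^ 2) ^ 2 = 1 - c ^ 2 := Real.sq_sqrt hd.le
  have hβ0 : √(1 - c ^ 2) ≠ 0 := (Real.sqrt_pos.2 hd).ne'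
  simp only [nuC, ellipseTangent, ip, Prod.smul_fst, Prod.smul_snd, smul_eq_mul]
  field_simp
  rw [hβ]
  ring

lemma ellipseTangent_ne_zero (hc : c ^ 2 < 1) {x : ℝ × ℝ} (hx : x ≠ 0) :
    ellipseTangent c x ≠ 0 := by
  have hβ0 : √(1 - c ^ 2) ≠ 0 := (Real.sqrt_pos.2 (sub_pos.2 hc)).ne'
  contrapose! hx
  simp_all [ellipseTangent, Prod.ext_iff]

lemma ne_of_isMaxOn_ellipseC (hc : c ^ 2 < 1) {a b x : ℝ × ℝ} (ha : a ∈ tableT c)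
    (hb : b ∈ tableT c) (hmax : IsMaxOn (fun y => nrm (y - a) + nrm (b - y)) (ellipseC c) x) :
    x ≠ a ∧ x ≠ b := by
  obtain ⟨y, hy, hya, hyb⟩ := exists_mem_ellipseC_ne hc a b
  have hlt : nrm (b - a) < nrm (y - a) + nrm (b - y) := by
    simpa only [sub_add_sub_cancel'] using
      nrm_add_lt_of_not_sameRay (not_sameRay_of_mem_ellipseC hc ha hb hy hya hyb)
  have hle : nrm (y - a) + nrm (b - y) ≤ nrm (x - a) + nrm (b - x) := hmax hy
  constructor <;> rintro rfl <;> simp only [sub_self, nrm_zero, zero_add, add_zero] at hle <;>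
    linarith

theorem reflection_law_of_isMaxOn (hc : c ^ 2 < 1) {a b x : ℝ × ℝ}
    (ha : a ∈ tableT c) (hb : b ∈ tableT c) (hx : x ∈ ellipseC c)
    (hmax : IsMaxOn (fun y => nrm (y - a) + nrm (b - y)) (ellipseC c) x) :
    unitVec (b - x) = unitVec (x - a) - (2 * ip (unitVec (x - a)) (nuC c x)) • nuC c x := by
  obtain ⟨hxa, hxb⟩ := ne_of_isMaxOn_ellipseC hc ha hb hmax
  set τ := ellipseTangent c x
  have hγ : HasDerivAt (fun t => Real.cos t • x + Real.sin t • τ) τ 0 := by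
    simpa only [Real.sin_zero, Real.cos_zero, neg_zero, zero_smul, one_smul, zero_add] using
      ((Real.hasDerivAt_cos 0).smul_const x).fun_add ((Real.hasDerivAt_sin 0).smul_const τ)
  have hγC : ∀ t, Real.cos t • x + Real.sin t • τ ∈ ellipseC c := fun t =>
    (ellipseForm_cos_smul_add_sin_smul_ellipseTangent hc x t).trans hx
  have hstat := ip_unitVec_sub_unitVec_eq_zero_of_isMaxOn hγ (by simp) hγC hxa hxb hmax
  have hN : ip (nuC c x) (nuC c x) = 1 := ip_unitVec_self fun h =>
    ne_zero_of_mem_ellipseC hx (by simpa [Prod.ext_iff, (sub_pos.2 hc).ne'] using h)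
  have hτ := ellipseTangent_ne_zero hc (ne_zero_of_mem_ellipseC hx)
  rcases eq_or_eq_reflection (ip_unitVec_self (sub_ne_zero.2 hxa))
      (ip_unitVec_self (sub_ne_zero.2 hxb.symm)) hN
      (eq_ip_smul_of_ip_eq_zero hN hstat (ip_nuC_ellipseTangent hc x) hτ) with h | h
  · exact absurd (sameRay_of_unitVec_eq h.symm) (not_sameRay_of_mem_ellipseC hc ha hb hx hxa hxb)
  · exact h

end ellipse

def polygonLength (P : ℕ → ℝ × ℝ) (n : ℕ) : ℝ :=
  ∑ k ∈ Finset.range (n + 1), nrm (P (k + 1) - P k)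

lemma polygonLength_update (P : ℕ → ℝ × ℝ) {j n : ℕ} (hj : 1 ≤ j) (hjn : j ≤ n) (y : ℝ × ℝ) :
    polygonLength (Function.update P j y) n
      = polygonLength P n + (nrm (y - P (j - 1)) + nrm (P (j + 1) - y))
        - (nrm (P j - P (j - 1)) + nrm (P (j + 1) - P j)) := by
  have key := Finset.sum_eq_add_of_mem (s := Finset.range (n + 1))
    (f := fun k => nrm (Function.update P j y (k + 1) - Function.update P j y k)
      - nrm (P (k + 1) - P k))
    (j - 1) j (Finset.mem_range.2 (by omega)) (Finset.mem_range.2 (by omega)) (by omega)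
    fun k _ hk => by
      rw [Function.update_of_ne (by omega), Function.update_of_ne hk.2, sub_self]
  rw [Finset.sum_sub_distrib, Nat.sub_add_cancel hj] at key
  simp only [Function.update_self, Function.update_of_ne (show j - 1 ≠ j by omega),
    Function.update_of_ne (show j + 1 ≠ j by omega)] at key
  unfold polygonLength
  linarith

def billiardPath (p₁ p₂ : ℝ × ℝ) (n : ℕ) (x : ℕ → ℝ × ℝ) (k : ℕ) : ℝ × ℝ :=
  if k = 0 then p₁ else if k ≤ n then x k else p₂

section billiardPath

variable {p₁ p₂ : ℝ × ℝ} {n : ℕ} {x : ℕ → ℝ × ℝ}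

lemma billiardPath_succ_self : billiardPath p₁ p₂ n x (n + 1) = p₂ := by
  simp [billiardPath]

lemma billiardPath_of_le {k : ℕ} (hk : 1 ≤ k) (hkn : k ≤ n) :
    billiardPath p₁ p₂ n x k = x k := by
  simp [billiardPath, hkn, Nat.one_le_iff_ne_zero.1 hk]

lemma billiardPath_mem {c : ℝ} (hp₁ : p₁ ∈ tableT c) (hp₂ : p₂ ∈ tableT c)
    (hx : ∀ k, x k ∈ ellipseC c) (k : ℕ) : billiardPath p₁ p₂ n x k ∈ tableT c := by
  unfold billiardPath
  split_ifs
  exacts [hp₁, (hx k).le, hp₂]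

lemma billiardPath_update {j : ℕ} (hj : 1 ≤ j) (hjn : j ≤ n) (y : ℝ × ℝ) :
    billiardPath p₁ p₂ n (Function.update x j y)
      = Function.update (billiardPath p₁ p₂ n x) j y := by
  funext k
  rcases eq_or_ne k j with rfl | hk
  · simp [billiardPath_of_le hj hjn]
  · simp [billiardPath, Function.update_of_ne hk]

lemma continuous_billiardPath (k : ℕ) : Continuous fun x => billiardPath p₁ p₂ n x k := by
  unfold billiardPath
  split_ifs <;> fun_prop

end billiardPath

lemma exists_isMaxOn_polygonLength {c : ℝ} (hc : c ^ 2 < 1) (p₁ p₂ : ℝ × ℝ) (n : ℕ) :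
    ∃ z : ℕ → ℝ × ℝ, (∀ k, z k ∈ ellipseC c) ∧
      IsMaxOn (fun x => polygonLength (billiardPath p₁ p₂ n x) n)
        (Set.univ.pi fun _ => ellipseC c) z := by
  have hcont : Continuous fun x => polygonLength (billiardPath p₁ p₂ n x) n :=
    continuous_finsetSum _ fun k _ => continuous_nrm.comp
      ((continuous_billiardPath (k + 1)).sub (continuous_billiardPath k))
  obtain ⟨z, hz, hmax⟩ := (isCompact_univ_pi fun _ => isCompact_ellipseC hc).exists_isMaxOn
    ⟨fun _ => (1, 0), fun _ _ => by simp [ellipseC]⟩ hcont.continuousOn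
  exact ⟨z, fun k => hz k trivial, hmax⟩

lemma isMaxOn_billiardPath {c : ℝ} {p₁ p₂ : ℝ × ℝ} {n : ℕ} {z : ℕ → ℝ × ℝ}
    (hz : ∀ k, z k ∈ ellipseC c)
    (hmax : IsMaxOn (fun x => polygonLength (billiardPath p₁ p₂ n x) n)
      (Set.univ.pi fun _ => ellipseC c) z) {j : ℕ} (hj : 1 ≤ j) (hjn : j ≤ n) :
    IsMaxOn (fun y => nrm (y - billiardPath p₁ p₂ n z (j - 1))
      + nrm (billiardPath p₁ p₂ n z (j + 1) - y)) (ellipseC c) (billiardPath p₁ p₂ n z j) := by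
  intro y hy
  have hupd : Function.update z j y ∈ Set.univ.pi fun _ => ellipseC c := fun k _ => by
    rcases eq_or_ne k j with rfl | hk
    · simpa using hy
    · simpa [Function.update_of_ne hk] using hz k
  have h : polygonLength (billiardPath p₁ p₂ n (Function.update z j y)) n
      ≤ polygonLength (billiardPath p₁ p₂ n z) n := hmax hupd
  rw [billiardPath_update hj hjn, polygonLength_update _ hj hjn] at h
  show (_ : ℝ) ≤ _
  linarith

theorem billiard_trajectory_exists_general (c : ℝ) (hc0 : 0 < c) (hc1 : c < 1)
    (p₁ p₂ : ℝ × ℝ) (hp₁ : p₁ ∈ tableT c) (hp₂ : p₂ ∈ tableT c) :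
    ∀ n : ℕ, 1 ≤ n →
      ∃ x u : ℕ → ℝ × ℝ,
        (∀ j, 1 ≤ j → j ≤ n → x j ∈ ellipseC c) ∧
        x 1 ≠ p₁ ∧ x n ≠ p₂ ∧
        (∀ j, 1 ≤ j → j ≤ n - 1 → x (j + 1) ≠ x j) ∧
        u 0 = (nrm (x 1 - p₁))⁻¹ • (x 1 - p₁) ∧
        (∀ j, 1 ≤ j → j ≤ n - 1 →
          u j = (nrm (x (j + 1) - x j))⁻¹ • (x (j + 1) - x j)) ∧
        u n = (nrm (p₂ - x n))⁻¹ • (p₂ - x n) ∧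
        (∀ j, 1 ≤ j → j ≤ n →
          u j = u (j - 1) - (2 * ip (u (j - 1)) (nuC c (x j))) • nuC c (x j)) := by
  intro n hn
  have hc : c ^ 2 < 1 := by nlinarith
  obtain ⟨z, hzC, hmax⟩ := exists_isMaxOn_polygonLength hc p₁ p₂ n
  have hPT := billiardPath_mem (n := n) hp₁ hp₂ hzC
  have hPC : ∀ j, 1 ≤ j → j ≤ n → billiardPath p₁ p₂ n z j ∈ ellipseC c := fun j hj hjn =>
    (billiardPath_of_le hj hjn).symm ▸ hzC j
  have hloc := fun j (hj : 1 ≤ j) (hjn : j ≤ n) => isMaxOn_billiardPath hzC hmax hj hjn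
  have hne := fun j (hj : 1 ≤ j) (hjn : j ≤ n) =>
    ne_of_isMaxOn_ellipseC hc (hPT _) (hPT _) (hloc j hj hjn)
  have hend : billiardPath p₁ p₂ n z (n + 1) = p₂ := billiardPath_succ_self
  set P := billiardPath p₁ p₂ n z
  refine ⟨P, fun j => unitVec (P (j + 1) - P j), hPC, (hne 1 le_rfl hn).1,
    hend ▸ (hne n hn le_rfl).2, fun j hj hjn => (hne j hj (by omega)).2.symm, rfl,
    fun j _ _ => rfl, by rw [← hend]; rfl, fun j hj hjn => ?_⟩
  beta_reduce
  rw [Nat.sub_add_cancel hj]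
  exact reflection_law_of_isMaxOn hc (hPT _) (hPT _) (hPC j hj hjn) (hloc j hj hjn)

/-- For any two points `p₁, p₂` of the elliptical billiard table (not both foci) and any
`n ≥ 1`, there is a billiard trajectory from `p₁` to `p₂` with exactly `n` bounces. -/
theorem billiard_trajectory_exists (c : ℝ) (hc0 : 0 < c) (hc1 : c < 1)
    (p₁ p₂ : ℝ × ℝ) (hp₁ : p₁ ∈ tableT c) (hp₂ : p₂ ∈ tableT c)
    (hfoci : ¬ (IsFocus c p₁ ∧ IsFocus c p₂)) :
    ∀ n : ℕ, 1 ≤ n →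
      ∃ x u : ℕ → ℝ × ℝ,
        (∀ j, 1 ≤ j → j ≤ n → x j ∈ ellipseC c) ∧
        x 1 ≠ p₁ ∧ x n ≠ p₂ ∧
        (∀ j, 1 ≤ j → j ≤ n - 1 → x (j + 1) ≠ x j) ∧
        u 0 = (nrm (x 1 - p₁))⁻¹ • (x 1 - p₁) ∧
        (∀ j, 1 ≤ j → j ≤ n - 1 →
          u j = (nrm (x (j + 1) - x j))⁻¹ • (x (j + 1) - x j)) ∧
        u n = (nrm (p₂ - x n))⁻¹ • (p₂ - x n) ∧
        (∀ j, 1 ≤ j → j ≤ n →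
          u j = u (j - 1) - (2 * ip (u (j - 1)) (nuC c (x j))) • nuC c (x j)) :=
  billiard_trajectory_exists_general c hc0 hc1 p₁ p₂ hp₁ hp₂
end
end

section
/- Let τ ∈ ℂ with Im τ > 0 and L = {aτ + b : a, b ∈ ℤ}, and let α ∈ (0, π). Suppose there exist four nonzero complex numbers v₁, v₂, v₃, v₄, pairwise non-proportional over ℝ (i.e. v_i/v_j ∉ ℝ for all i ≠ j), such that for each i both v_i and e^{iα}·v_i are periodic directions for L. Then there exist rational numbers a, b ∈ ℚ with τ² + aτ + b = 0 (i.e. ℂ/L has complex multiplication). -/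
noncomputable section

/-- The lattice `L = ℤτ + ℤ ⊂ ℂ`. -/
def latticeL (τ : ℂ) : Set ℂ := {z | ∃ a b : ℤ, z = a * τ + b}

/-- `v` is a periodic direction for the parallelogram billiard associated to the lattice
`L = ℤτ + ℤ`: `v = r·λ` for some nonzero real `r` and nonzero `λ ∈ L`. -/
def IsPeriodicDir (τ : ℂ) (v : ℂ) : Prop :=
  ∃ r : ℝ, r ≠ 0 ∧ ∃ lam ∈ latticeL τ, lam ≠ 0 ∧ v = (r : ℂ) * lam

/-!
Put the ℚ-structure `Q = ℚτ + ℚ` on the real plane `ℂ`. Rescaling each `vᵢ` into `Q`, the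
hypothesis says that the ℝ-linear map `z ↦ E z`, `E = e^{iα}`, sends three distinct rational
lines `ℝu₀, ℝu₁, ℝu₂` to rational lines, say `tᵢ E uᵢ ∈ Q`. Writing `u₂ = p u₀ + q u₁` and
`t₂ E u₂ = p' t₀ E u₀ + q' t₁ E u₁` with rational coefficients and comparing real coordinates
shows `t₁ / t₀ ∈ ℚ`, so `F = t₁ E` maps the ℚ-basis `u₀, u₁` of `Q` into `Q`, i.e. `F Q ⊆ Q`.
As `F ∉ ℝ`, writing `F = pτ + q` with `p ≠ 0` and `Fτ = p'τ + q'` gives the quadratic equation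
`pτ² + qτ = p'τ + q'`.
-/

open Module Submodule

theorem linearIndependent_real_pair_of_div_ne {x y : ℂ} (h : ¬ ∃ r : ℝ, x / y = r) :
    LinearIndependent ℝ ![x, y] := by
  have hy : y ≠ 0 := by rintro rfl; exact h ⟨0, by simp⟩
  rw [LinearIndependent.pair_symm_iff, LinearIndependent.pair_iff' hy]
  rintro a rfl
  exact h ⟨a, by rw [Complex.real_smul, mul_div_assoc, div_self hy, mul_one]⟩

theorem linearIndependent_real_pair_mul {x y : ℂ} (h : LinearIndependent ℝ ![x, y]) {c : ℂ}
    (hc : c ≠ 0) : LinearIndependent ℝ ![c * x, c * y] := by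
  rw [LinearIndependent.pair_iff] at h ⊢
  intro s t hst
  apply h s t
  simp only [Complex.real_smul] at hst ⊢
  have : c * (s * x + t * y) = 0 := by linear_combination hst
  simpa [hc] using this

theorem span_rat_pair_eq_of_linearIndependent_real {a b x y : ℂ}
    (hx : x ∈ span ℚ {a, b}) (hy : y ∈ span ℚ {a, b}) (hxy : LinearIndependent ℝ ![x, y]) :
    span ℚ {x, y} = span ℚ {a, b} := by
  have : FiniteDimensional ℚ (span ℚ ({a, b} : Set ℂ)) := .span_of_finite ℚ (Set.toFinite _)
  refine eq_of_le_of_finrank_le (span_le.mpr (Set.insert_subset hx (by simpa using hy))) ?_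
  calc finrank ℚ (span ℚ ({a, b} : Set ℂ)) ≤ 2 := by
        refine (finrank_span_le_card _).trans ?_
        simpa using Finset.card_le_two
    _ = finrank ℚ (span ℚ ({x, y} : Set ℂ)) := by
        rw [← Matrix.range_cons_cons_empty, finrank_span_eq_card (hxy.restrict_scalars' ℚ)]
        simp

section ThreeLines

variable {a b E u₀ u₁ u₂ : ℂ} {t₀ t₁ t₂ : ℝ}

theorem exists_rat_mul_eq_of_three_lines (hE : E ≠ 0) (ht₀ : t₀ ≠ 0) (ht₁ : t₁ ≠ 0)
    (ht₂ : t₂ ≠ 0) (hu₀ : u₀ ∈ span ℚ {a, b}) (hu₁ : u₁ ∈ span ℚ {a, b})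
    (hu₂ : u₂ ∈ span ℚ {a, b}) (h₀₁ : LinearIndependent ℝ ![u₀, u₁])
    (h₀₂ : LinearIndependent ℝ ![u₀, u₂]) (h₁₂ : LinearIndependent ℝ ![u₁, u₂])
    (hw₀ : (t₀ : ℂ) * (E * u₀) ∈ span ℚ {a, b}) (hw₁ : (t₁ : ℂ) * (E * u₁) ∈ span ℚ {a, b})
    (hw₂ : (t₂ : ℂ) * (E * u₂) ∈ span ℚ {a, b}) :
    ∃ ρ : ℚ, t₁ = ρ * t₀ := by
  have hEu := linearIndependent_real_pair_mul h₀₁ hE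
  have hw : LinearIndependent ℝ ![(t₀ : ℂ) * (E * u₀), (t₁ : ℂ) * (E * u₁)] := by
    simpa only [Complex.real_smul] using
      (LinearIndependent.pair_smul_smul_iff ht₀.isUnit ht₁.isUnit).mpr hEu
  obtain ⟨p, q, hu⟩ :=
    mem_span_pair.mp ((span_rat_pair_eq_of_linearIndependent_real hu₀ hu₁ h₀₁).ge hu₂)
  obtain ⟨p', q', hw'⟩ :=
    mem_span_pair.mp ((span_rat_pair_eq_of_linearIndependent_real hw₀ hw₁ hw).ge hw₂)
  simp only [Rat.smul_def] at hu hw'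
  -- the two expansions of `t₂ E u₂` in the real basis `E u₀, E u₁` agree
  obtain ⟨hp, hq⟩ : t₂ * p - t₀ * p' = 0 ∧ t₂ * q - t₁ * q' = 0 := by
    refine LinearIndependent.pair_iff.mp hEu _ _ ?_
    simp only [Complex.real_smul]
    push_cast
    linear_combination t₂ * E * hu - hw'
  have hp0 : p ≠ 0 := by
    rintro rfl
    simpa using LinearIndependent.pair_iff.mp h₁₂ q (-1) (by
      simp only [Complex.real_smul]; push_cast; linear_combination hu)
  have hq0 : q ≠ 0 := by
    rintro rfl
    simpa using LinearIndependent.pair_iff.mp h₀₂ p (-1) (by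
      simp only [Complex.real_smul]; push_cast; linear_combination hu)
  have hq'0 : q' ≠ 0 := by
    rintro rfl
    exact mul_ne_zero ht₂ (Rat.cast_ne_zero.mpr hq0) (by simpa using hq)
  refine ⟨q * p' / (q' * p), ?_⟩
  push_cast
  field_simp
  linear_combination q * hp - p * hq

theorem exists_real_mul_mem_of_three_lines (hE : E ≠ 0) (ht₀ : t₀ ≠ 0) (ht₁ : t₁ ≠ 0)
    (ht₂ : t₂ ≠ 0) (hu₀ : u₀ ∈ span ℚ {a, b}) (hu₁ : u₁ ∈ span ℚ {a, b})
    (hu₂ : u₂ ∈ span ℚ {a, b}) (h₀₁ : LinearIndependent ℝ ![u₀, u₁])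
    (h₀₂ : LinearIndependent ℝ ![u₀, u₂]) (h₁₂ : LinearIndependent ℝ ![u₁, u₂])
    (hw₀ : (t₀ : ℂ) * (E * u₀) ∈ span ℚ {a, b}) (hw₁ : (t₁ : ℂ) * (E * u₁) ∈ span ℚ {a, b})
    (hw₂ : (t₂ : ℂ) * (E * u₂) ∈ span ℚ {a, b}) :
    ∃ c : ℝ, c ≠ 0 ∧ ∀ z ∈ span ℚ {a, b}, (c : ℂ) * E * z ∈ span ℚ {a, b} := by
  obtain ⟨ρ, hρ⟩ := exists_rat_mul_eq_of_three_lines hE ht₀ ht₁ ht₂ hu₀ hu₁ hu₂ h₀₁ h₀₂ h₁₂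
    hw₀ hw₁ hw₂
  have hρu₀ : (t₁ : ℂ) * E * u₀ = ρ • ((t₀ : ℂ) * (E * u₀)) := by
    rw [Rat.smul_def, hρ]
    push_cast
    ring
  have hmem : ∀ u ∈ ({u₀, u₁} : Set ℂ), (t₁ : ℂ) * E * u ∈ span ℚ {a, b} := by
    rintro _ (rfl | rfl)
    · rw [hρu₀]
      exact smul_mem _ ρ hw₀
    · rw [mul_assoc]
      exact hw₁
  have hspan : span ℚ {u₀, u₁} ≤ (span ℚ {a, b}).comap (LinearMap.mulLeft ℚ ((t₁ : ℂ) * E)) :=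
    span_le.mpr hmem
  refine ⟨t₁, ht₁, fun z hz => hspan ?_⟩
  rwa [span_rat_pair_eq_of_linearIndependent_real hu₀ hu₁ h₀₁]

end ThreeLines

theorem exists_quadratic_of_mul_mem_span {τ F : ℂ} (hF : F.im ≠ 0)
    (h : ∀ z ∈ span ℚ {τ, 1}, F * z ∈ span ℚ {τ, 1}) :
    ∃ a b : ℚ, τ ^ 2 + a * τ + b = 0 := by
  obtain ⟨p, q, hF1⟩ := mem_span_pair.mp (by simpa using h 1 (subset_span (by simp)))
  obtain ⟨p', q', hFτ⟩ := mem_span_pair.mp (h τ (subset_span (by simp)))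
  simp only [Rat.smul_def, mul_one] at hF1 hFτ
  have hp : (p : ℂ) ≠ 0 := by
    rintro hp
    apply hF
    rw [← hF1, hp]
    simp
  refine ⟨(q - p') / p, -q' / p, ?_⟩
  push_cast
  field_simp
  linear_combination τ * hF1 - hFτ

theorem IsPeriodicDir.exists_real_mul_mem_span {τ v : ℂ} (h : IsPeriodicDir τ v) :
    ∃ r : ℝ, r ≠ 0 ∧ (r : ℂ) * v ∈ span ℚ {τ, 1} := by
  obtain ⟨r, hr, _, ⟨a, b, rfl⟩, -, rfl⟩ := h
  refine ⟨r⁻¹, inv_ne_zero hr, mem_span_pair.mpr ⟨a, b, ?_⟩⟩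
  have : (r : ℂ) ≠ 0 := Complex.ofReal_ne_zero.mpr hr
  simp only [Rat.smul_def, Complex.ofReal_inv]
  field_simp
  push_cast
  ring

theorem parallelogram_CM_general (τ : ℂ) (α : ℝ) (hα : α ∈ Set.Ioo 0 Real.pi)
    (v : Fin 4 → ℂ)
    (hnp : ∀ i j : Fin 4, i ≠ j → ¬ ∃ r : ℝ, v i / v j = (r : ℂ))
    (hper : ∀ i, IsPeriodicDir τ (v i) ∧
      IsPeriodicDir τ (Complex.exp (α * Complex.I) * v i)) :
    ∃ a b : ℚ, τ ^ 2 + (a : ℂ) * τ + (b : ℂ) = 0 := by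
  set E := Complex.exp (α * Complex.I)
  choose r hr hu using fun i => (hper i).1.exists_real_mul_mem_span
  choose s hs hw using fun i => (hper i).2.exists_real_mul_mem_span
  have hind : ∀ i j, i ≠ j → LinearIndependent ℝ ![(r i : ℂ) * v i, (r j : ℂ) * v j] :=
    fun i j hij => by
      simpa only [Complex.real_smul] using (LinearIndependent.pair_smul_smul_iff (hr i).isUnit
        (hr j).isUnit).mpr (linearIndependent_real_pair_of_div_ne (hnp i j hij))
  have hEu : ∀ i, ((s i / r i : ℝ) : ℂ) * (E * ((r i : ℂ) * v i)) ∈ span ℚ {τ, 1} := by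
    intro i
    convert hw i using 1
    have : (r i : ℂ) ≠ 0 := Complex.ofReal_ne_zero.mpr (hr i)
    push_cast
    field_simp
  have ht : ∀ i, s i / r i ≠ 0 := fun i => div_ne_zero (hs i) (hr i)
  obtain ⟨c, hc, hcE⟩ := exists_real_mul_mem_of_three_lines (Complex.exp_ne_zero _)
    (ht 0) (ht 1) (ht 2) (hu 0) (hu 1) (hu 2) (hind 0 1 (by decide)) (hind 0 2 (by decide))
    (hind 1 2 (by decide)) (hEu 0) (hEu 1) (hEu 2)
  refine exists_quadratic_of_mul_mem_span (F := c * E) ?_ hcE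
  rw [Complex.im_ofReal_mul, Complex.exp_ofReal_mul_I_im]
  exact mul_ne_zero hc (Real.sin_pos_of_pos_of_lt_pi hα.1 hα.2).ne'

/-- If there are four pairwise non-ℝ-proportional nonzero directions `vᵢ` such that both
`vᵢ` and `e^{iα}·vᵢ` are periodic directions for `L = ℤτ + ℤ`, then `ℂ/L` has complex
multiplication, i.e. `τ` is quadratic over `ℚ`. -/
theorem parallelogram_CM (τ : ℂ) (hτ : 0 < τ.im) (α : ℝ) (hα : α ∈ Set.Ioo 0 Real.pi)
    (v : Fin 4 → ℂ) (hv0 : ∀ i, v i ≠ 0)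
    (hnp : ∀ i j : Fin 4, i ≠ j → ¬ ∃ r : ℝ, v i / v j = (r : ℂ))
    (hper : ∀ i, IsPeriodicDir τ (v i) ∧
      IsPeriodicDir τ (Complex.exp (α * Complex.I) * v i)) :
    ∃ a b : ℚ, τ ^ 2 + (a : ℂ) * τ + (b : ℂ) = 0 :=
  parallelogram_CM_general τ α hα v hnp hper
end
end

section
/- Let τ ∈ ℂ with Im τ > 0 and L = {aτ + b : a, b ∈ ℤ}, and suppose there exist rational numbers a, b ∈ ℚ with τ² + aτ + b = 0 (i.e. ℂ/L has complex multiplication). Then the set of angles α ∈ (0, π) with the following property is infinite: there exists an infinite set S of nonzero complex numbers, pairwise non-proportional over ℝ (v/w ∉ ℝ for distinct v, w ∈ S), such that for every v ∈ S both v and e^{iα}·v are periodic directions for L. -/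
/-!
Clearing denominators, `τ` satisfies `N τ² + A τ + B = 0` with `N, A, B ∈ ℤ`, `N > 0`, so every
`γ = N τ + n` (`n ∈ ℕ`) multiplies `L` into itself. Rotation by `arg γ` is multiplication by
`γ / |γ|`, hence it sends periodic directions to periodic directions. The angles `arg γ` lie in
`(0, π)` and are pairwise distinct because the `γ` lie on one horizontal line in the upper half
plane; the directions `τ + m` (`m ∈ ℕ`) lie on another and so are pairwise non-proportional.
-/

noncomputable section

open Complex Set

theorem exists_int_quadratic_of_rat {τ : ℂ} {a b : ℚ} (h : τ ^ 2 + (a : ℂ) * τ + (b : ℂ) = 0) :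
    ∃ N A B : ℤ, 0 < N ∧ (N : ℂ) * τ ^ 2 + A * τ + B = 0 := by
  refine ⟨a.den * b.den, a.num * b.den, b.num * a.den, by positivity, ?_⟩
  have ha : (a.den : ℂ) * a = a.num := by exact_mod_cast a.den_mul_eq_num
  have hb : (b.den : ℂ) * b = b.num := by exact_mod_cast b.den_mul_eq_num
  push_cast
  linear_combination (a.den * b.den : ℂ) * h - (b.den : ℂ) * τ * ha - (a.den : ℂ) * hb

theorem mul_mem_latticeL {τ : ℂ} {N A B : ℤ} (hτ : (N : ℂ) * τ ^ 2 + A * τ + B = 0) (n : ℤ)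
    {z : ℂ} (hz : z ∈ latticeL τ) : (N * τ + n) * z ∈ latticeL τ := by
  obtain ⟨p, q, rfl⟩ := hz
  refine ⟨N * q + n * p - A * p, n * q - B * p, ?_⟩
  push_cast
  linear_combination (p : ℂ) * hτ

theorem isPeriodicDir_of_mem_latticeL {τ v : ℂ} (hv : v ∈ latticeL τ) (hv0 : v ≠ 0) :
    IsPeriodicDir τ v :=
  ⟨1, one_ne_zero, v, hv, hv0, by simp⟩

theorem exp_arg_mul_I {γ : ℂ} (hγ : γ ≠ 0) : exp (arg γ * I) = γ / (‖γ‖ : ℂ) := by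
  rw [eq_div_iff (ofReal_ne_zero.mpr (norm_ne_zero_iff.mpr hγ)), mul_comm]
  exact norm_mul_exp_arg_mul_I γ

theorem IsPeriodicDir.exp_arg_mul {τ γ v : ℂ} (hγ : γ ≠ 0)
    (hγL : ∀ z ∈ latticeL τ, γ * z ∈ latticeL τ) (hv : IsPeriodicDir τ v) :
    IsPeriodicDir τ (exp (arg γ * I) * v) := by
  obtain ⟨r, hr, lam, hlam, hlam0, rfl⟩ := hv
  have hγn : ‖γ‖ ≠ 0 := norm_ne_zero_iff.mpr hγ
  refine ⟨r / ‖γ‖, div_ne_zero hr hγn, γ * lam, hγL lam hlam, mul_ne_zero hγ hlam0, ?_⟩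
  rw [exp_arg_mul_I hγ]
  push_cast
  ring

theorem arg_mem_Ioo_of_im_pos {z : ℂ} (hz : 0 < z.im) : arg z ∈ Ioo 0 Real.pi :=
  ⟨(arg_nonneg_iff.mpr hz.le).lt_of_ne fun h => hz.ne' (arg_eq_zero_iff.mp h.symm).2,
    arg_lt_pi_iff.mpr (Or.inr hz.ne')⟩

theorem eq_of_ofReal_mul_eq_of_im_eq {c : ℝ} {z w : ℂ} (h : (c : ℂ) * z = w)
    (him : z.im = w.im) (hz : z.im ≠ 0) : z = w := by
  have hc : c * z.im = z.im := by rw [← im_ofReal_mul, h, him]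
  have hc1 : c = 1 := mul_right_cancel₀ hz (hc.trans (one_mul _).symm)
  rwa [hc1, ofReal_one, one_mul] at h

theorem eq_of_arg_eq_of_im_eq {z w : ℂ} (harg : arg z = arg w) (him : z.im = w.im)
    (hz : z.im ≠ 0) : z = w := by
  have hz0 : z ≠ 0 := fun h => hz (by simp [h])
  have hw0 : w ≠ 0 := fun h => hz (by simp [him, h])
  rw [arg_eq_arg_iff hz0 hw0, ← ofReal_div] at harg
  exact eq_of_ofReal_mul_eq_of_im_eq harg him hz

def IsPeriodicAngle (τ : ℂ) (α : ℝ) : Prop :=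
  α ∈ Ioo 0 Real.pi ∧
    ∃ S : Set ℂ, S.Infinite ∧ (∀ v ∈ S, v ≠ 0) ∧
      (∀ v ∈ S, ∀ w ∈ S, v ≠ w → ¬ ∃ r : ℝ, v / w = (r : ℂ)) ∧
      (∀ v ∈ S, IsPeriodicDir τ v ∧ IsPeriodicDir τ (exp (α * I) * v))

theorem isPeriodicAngle_arg {τ γ : ℂ} (hτ : 0 < τ.im) (hγ : 0 < γ.im)
    (hγL : ∀ z ∈ latticeL τ, γ * z ∈ latticeL τ) : IsPeriodicAngle τ (arg γ) := by
  have hγ0 : γ ≠ 0 := fun h => hγ.ne' (by simp [h])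
  have him (m : ℕ) : (τ + m).im = τ.im := by simp
  have hne (m : ℕ) : τ + m ≠ 0 := fun h => hτ.ne' (by rw [← him m, h, zero_im])
  refine ⟨arg_mem_Ioo_of_im_pos hγ, range fun m : ℕ => τ + m,
    infinite_range_of_injective fun m n h => by simpa using h, ?_, ?_, ?_⟩
  · rintro _ ⟨m, rfl⟩
    exact hne m
  · rintro _ ⟨m, rfl⟩ _ ⟨n, rfl⟩ hmn ⟨r, hr⟩
    rw [div_eq_iff (hne n)] at hr
    exact hmn (eq_of_ofReal_mul_eq_of_im_eq hr.symm (by rw [him, him]) (him n ▸ hτ.ne')).symm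
  · rintro _ ⟨m, rfl⟩
    have hv := isPeriodicDir_of_mem_latticeL ⟨1, m, by push_cast; ring⟩ (hne m)
    exact ⟨hv, hv.exp_arg_mul hγ0 hγL⟩

/-- If `ℂ/L` has complex multiplication, then for infinitely many angles `α ∈ (0, π)`
there is an infinite set of pairwise non-ℝ-proportional nonzero directions `v` such that
both `v` and `e^{iα}·v` are periodic directions for `L = ℤτ + ℤ`. -/
theorem parallelogram_CM_converse (τ : ℂ) (hτ : 0 < τ.im)
    (hCM : ∃ a b : ℚ, τ ^ 2 + (a : ℂ) * τ + (b : ℂ) = 0) :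
    {α : ℝ | α ∈ Set.Ioo 0 Real.pi ∧
      ∃ S : Set ℂ, S.Infinite ∧ (∀ v ∈ S, v ≠ 0) ∧
        (∀ v ∈ S, ∀ w ∈ S, v ≠ w → ¬ ∃ r : ℝ, v / w = (r : ℂ)) ∧
        (∀ v ∈ S, IsPeriodicDir τ v ∧
          IsPeriodicDir τ (Complex.exp (α * Complex.I) * v))}.Infinite := by
  obtain ⟨a, b, hab⟩ := hCM
  obtain ⟨N, A, B, hN, hτ2⟩ := exists_int_quadratic_of_rat hab
  let γ (n : ℕ) : ℂ := N * τ + n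
  have hγim (n : ℕ) : (γ n).im = N * τ.im := by simp [γ]
  have hγpos (n : ℕ) : 0 < (γ n).im := hγim n ▸ mul_pos (by exact_mod_cast hN) hτ
  have hinj : Function.Injective fun n => arg (γ n) := fun m n h => by
    simpa [γ] using eq_of_arg_eq_of_im_eq h (by rw [hγim, hγim]) (hγpos m).ne'
  exact infinite_of_injective_forall_mem hinj fun n =>
    isPeriodicAngle_arg hτ (hγpos n) (fun z hz => by exact_mod_cast mul_mem_latticeL hτ2 n hz)
end
end

section
/- In ℙ²(ℂ) with homogeneous coordinates (x : y : z), let L₁ = {y = z}, L₂ = {x + y = 0}, L₃ = {x + y + z = 0}, and let β be the automorphism of ℙ²(ℂ) induced by the matrix with rows (1,1,0), (0,1,0), (0,0,2). For every natural number n, setting m = 2ⁿ + n, the point P = (−m−1 : 1 : 1) satisfies: P ∈ L₁, β^m(P) ∈ L₂, and β^n(P) ∈ L₃. Consequently, the set of points of L₁ whose β-orbit intersects both L₂ and L₃ is infinite. -/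
noncomputable section

open Projectivization

/-- The projective plane `ℙ²(ℂ)`. -/
abbrev ProjPlane := Projectivization ℂ (Fin 3 → ℂ)

/-- The automorphism of `ℙ²(ℂ)` induced by a linear automorphism `g` of `ℂ³`. -/
def projAct (g : (Fin 3 → ℂ) ≃ₗ[ℂ] (Fin 3 → ℂ)) (x : ProjPlane) : ProjPlane :=
  Projectivization.map g.toLinearMap g.injective x

/-- The point lies on the line cut out by the linear form `f`. -/
def OnLine (P : ProjPlane) (f : (Fin 3 → ℂ) →ₗ[ℂ] ℂ) : Prop :=
  P.submodule ≤ LinearMap.ker f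

/-- coordinate functionals -/
def coord (i : Fin 3) : (Fin 3 → ℂ) →ₗ[ℂ] ℂ := LinearMap.proj i

/-- The line `L₁ : y = z`. -/
def lineOne : (Fin 3 → ℂ) →ₗ[ℂ] ℂ := coord 1 - coord 2

/-- The line `L₂ : x + y = 0`. -/
def lineTwo : (Fin 3 → ℂ) →ₗ[ℂ] ℂ := coord 0 + coord 1

/-- The line `L₃ : x + y + z = 0`. -/
def lineThree : (Fin 3 → ℂ) →ₗ[ℂ] ℂ := coord 0 + coord 1 + coord 2

/-- The point `P = (−m−1 : 1 : 1)` where `m = 2ⁿ + n`. -/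
def pt (n : ℕ) : ProjPlane :=
  Projectivization.mk ℂ ![-((2 : ℂ) ^ n + (n : ℂ)) - 1, 1, 1] (by
    intro h
    have h1 := congrFun h 1
    simp at h1)

lemma onLine_mk {v : Fin 3 → ℂ} (hv : v ≠ 0) (f : (Fin 3 → ℂ) →ₗ[ℂ] ℂ) :
    OnLine (mk ℂ v hv) f ↔ f v = 0 := by
  rw [OnLine, submodule_mk, Submodule.span_singleton_le_iff_mem, LinearMap.mem_ker]

lemma projAct_mk (g : (Fin 3 → ℂ) ≃ₗ[ℂ] (Fin 3 → ℂ)) {v : Fin 3 → ℂ} (hv : v ≠ 0) :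
    projAct g (mk ℂ v hv) = mk ℂ (g v) (g.map_ne_zero_iff.2 hv) :=
  map_mk _ _ _ _

lemma beta_apply {β : (Fin 3 → ℂ) ≃ₗ[ℂ] (Fin 3 → ℂ)}
    (hβ : β.toLinearMap = Matrix.toLin' !![1, 1, 0; 0, 1, 0; 0, 0, 2]) (v : Fin 3 → ℂ) :
    β v = ![v 0 + v 1, v 1, 2 * v 2] := by
  change β.toLinearMap v = _
  rw [hβ, Matrix.toLin'_apply]
  ext i
  fin_cases i <;> simp [Matrix.mulVec, dotProduct, Fin.sum_univ_three]

lemma beta_pow_apply {β : (Fin 3 → ℂ) ≃ₗ[ℂ] (Fin 3 → ℂ)}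
    (hβ : β.toLinearMap = Matrix.toLin' !![1, 1, 0; 0, 1, 0; 0, 0, 2]) (N : ℕ) (v : Fin 3 → ℂ) :
    (β ^ N) v = ![v 0 + N * v 1, v 1, 2 ^ N * v 2] := by
  induction N with
  | zero => ext i; fin_cases i <;> simp
  | succ N ih =>
    rw [pow_succ', LinearEquiv.mul_apply, ih, beta_apply hβ]
    ext i
    fin_cases i <;> simp [add_mul, add_assoc, pow_succ', mul_assoc]

lemma onLine_pt_lineOne (n : ℕ) : OnLine (pt n) lineOne := by
  simp [pt, onLine_mk, lineOne, coord]

lemma onLine_projAct_pow_pt_lineTwo {β : (Fin 3 → ℂ) ≃ₗ[ℂ] (Fin 3 → ℂ)}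
    (hβ : β.toLinearMap = Matrix.toLin' !![1, 1, 0; 0, 1, 0; 0, 0, 2]) (n : ℕ) :
    OnLine (projAct (β ^ (2 ^ n + n)) (pt n)) lineTwo := by
  rw [pt, projAct_mk, onLine_mk, beta_pow_apply hβ]
  simp only [lineTwo, coord, LinearMap.add_apply, LinearMap.coe_proj, Function.eval,
    Matrix.cons_val_zero, Matrix.cons_val_one, Matrix.cons_val]
  push_cast
  ring

lemma onLine_projAct_pow_pt_lineThree {β : (Fin 3 → ℂ) ≃ₗ[ℂ] (Fin 3 → ℂ)}
    (hβ : β.toLinearMap = Matrix.toLin' !![1, 1, 0; 0, 1, 0; 0, 0, 2]) (n : ℕ) :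
    OnLine (projAct (β ^ n) (pt n)) lineThree := by
  rw [pt, projAct_mk, onLine_mk, beta_pow_apply hβ]
  simp only [lineThree, coord, LinearMap.add_apply, LinearMap.coe_proj, Function.eval,
    Matrix.cons_val_zero, Matrix.cons_val_one, Matrix.cons_val]
  ring

lemma pt_injective : Function.Injective pt := by
  intro a b hab
  obtain ⟨c, hc⟩ := (mk_eq_mk_iff _ _ _ _ _).1 hab
  have hc1 : (c : ℂ) = 1 := by simpa [Units.smul_def] using congrFun hc 1
  have hx : -(2 : ℂ) ^ b - b = -2 ^ a - a := by
    simpa [Units.smul_def, hc1, sub_eq_add_neg, add_comm] using congrFun hc 0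
  have hm : StrictMono fun n : ℕ => 2 ^ n + n :=
    (pow_right_strictMono₀ one_lt_two).add strictMono_id
  refine hm.injective (Nat.cast_injective (R := ℂ) ?_)
  push_cast
  linear_combination hx

/-- In the example `L₁ : y = z`, `L₂ : x + y = 0`, `L₃ : x + y + z = 0`, with `β` induced
by the matrix with rows `(1,1,0), (0,1,0), (0,0,2)`, the point `P = (−m−1 : 1 : 1)`,
`m = 2ⁿ + n`, lies on `L₁`, `β^m(P)` lies on `L₂` and `β^n(P)` lies on `L₃`; consequently
infinitely many points of `L₁` have a `β`-orbit meeting both `L₂` and `L₃`. -/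
theorem example_infinite_family (β : (Fin 3 → ℂ) ≃ₗ[ℂ] (Fin 3 → ℂ))
    (hβ : β.toLinearMap = Matrix.toLin' !![1, 1, 0; 0, 1, 0; 0, 0, 2]) :
    (∀ n : ℕ,
      OnLine (pt n) lineOne ∧
      OnLine (projAct (β ^ (2 ^ n + n)) (pt n)) lineTwo ∧
      OnLine (projAct (β ^ n) (pt n)) lineThree) ∧
    {P : ProjPlane | OnLine P lineOne ∧
      (∃ m : ℤ, OnLine (projAct (β ^ m) P) lineTwo) ∧
      (∃ k : ℤ, OnLine (projAct (β ^ k) P) lineThree)}.Infinite := by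
  have hpt : ∀ n : ℕ, OnLine (pt n) lineOne ∧
      OnLine (projAct (β ^ (2 ^ n + n)) (pt n)) lineTwo ∧
      OnLine (projAct (β ^ n) (pt n)) lineThree := fun n =>
    ⟨onLine_pt_lineOne n, onLine_projAct_pow_pt_lineTwo hβ n,
      onLine_projAct_pow_pt_lineThree hβ n⟩
  refine ⟨hpt, Set.infinite_of_injective_forall_mem pt_injective fun n => ?_⟩
  obtain ⟨h1, h2, h3⟩ := hpt n
  exact ⟨h1, ⟨(2 ^ n + n : ℕ), by rwa [zpow_natCast]⟩, ⟨n, by rwa [zpow_natCast]⟩⟩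
end
end

section
/- For every real number u ≥ 1, one has ∫_u^∞ dx/(x·√(x−1)) = π − 2·arctan(√(u−1)), and the function λ ↦ ∫_u^∞ dx/√(x(x−1)(x−λ)) tends to π − 2·arctan(√(u−1)) as λ → 0⁺ (limit taken along λ ∈ (0,1)). -/
open MeasureTheory Real Filter Set Topology

/-!
`2 arctan √(x − 1)` is an antiderivative of `1/(x√(x − 1))` on `(1, ∞)` that tends to `π` at
infinity, which gives the first integral. For `λ ≤ 1/2` and `x > 1` one has `x − λ ≥ x/2`, so the
integrand `1/√(x(x − 1)(x − λ))` is dominated by `√2/(x√(x − 1))`; dominated convergence then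
gives the limit `λ → 0`.
-/

lemma hasDerivAt_two_mul_arctan_sqrt_sub_one {x : ℝ} (hx : 1 < x) :
    HasDerivAt (fun y => 2 * arctan (√(y - 1))) (x * √(x - 1))⁻¹ x := by
  have hx1 : 0 < x - 1 := by linarith
  have hsqrt : HasDerivAt (fun y => √(y - 1)) (1 / (2 * √(x - 1))) x := by
    refine ((hasDerivAt_sqrt hx1.ne').comp x ((hasDerivAt_id x).sub_const 1)).congr_deriv ?_
    simp
  refine (((hasDerivAt_arctan _).comp x hsqrt).const_mul 2).congr_deriv ?_
  have hs : 0 < √(x - 1) := sqrt_pos.2 hx1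
  rw [sq_sqrt hx1.le]
  field_simp
  ring

lemma tendsto_two_mul_arctan_sqrt_sub_one_atTop :
    Tendsto (fun y => 2 * arctan (√(y - 1))) atTop (𝓝 π) := by
  have hsqrt : Tendsto (fun y : ℝ => √(y - 1)) atTop atTop :=
    tendsto_sqrt_atTop.comp (tendsto_atTop_add_const_right _ (-1) tendsto_id)
  have harctan := (tendsto_arctan_atTop.mono_right nhdsWithin_le_nhds).comp hsqrt
  simpa [mul_div_cancel₀] using harctan.const_mul 2

lemma inv_mul_sqrt_sub_one_nonneg {x : ℝ} (hx : 0 ≤ x) : 0 ≤ (x * √(x - 1))⁻¹ := by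
  positivity

lemma integrableOn_Ioi_inv_mul_sqrt_sub_one {u : ℝ} (hu : 1 ≤ u) :
    IntegrableOn (fun x => (x * √(x - 1))⁻¹) (Ioi u) :=
  integrableOn_Ioi_deriv_of_nonneg (by fun_prop)
    (fun _ hx => hasDerivAt_two_mul_arctan_sqrt_sub_one (hu.trans_lt hx))
    (fun _ hx => inv_mul_sqrt_sub_one_nonneg (by linarith [mem_Ioi.1 hx]))
    tendsto_two_mul_arctan_sqrt_sub_one_atTop

lemma integral_Ioi_inv_mul_sqrt_sub_one {u : ℝ} (hu : 1 ≤ u) :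
    ∫ x in Ioi u, (x * √(x - 1))⁻¹ = π - 2 * arctan (√(u - 1)) :=
  integral_Ioi_of_hasDerivAt_of_nonneg (by fun_prop)
    (fun _ hx => hasDerivAt_two_mul_arctan_sqrt_sub_one (hu.trans_lt hx))
    (fun _ hx => inv_mul_sqrt_sub_one_nonneg (by linarith [mem_Ioi.1 hx]))
    tendsto_two_mul_arctan_sqrt_sub_one_atTop

lemma inv_sqrt_mul_sub_le {x lam : ℝ} (hx : 1 < x) (hlam : lam ≤ x / 2) :
    (√(x * (x - 1) * (x - lam)))⁻¹ ≤ √2 * (x * √(x - 1))⁻¹ := by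
  have hx0 : 0 < x := by linarith
  have hx1 : 0 < x - 1 := by linarith
  have hle : x * √(x - 1) ≤ √2 * √(x * (x - 1) * (x - lam)) :=
    calc x * √(x - 1) = √(x ^ 2 * (x - 1)) := by rw [sqrt_mul (sq_nonneg x), sqrt_sq hx0.le]
      _ ≤ √(2 * (x * (x - 1) * (x - lam))) :=
        sqrt_le_sqrt <| by
          nlinarith [mul_nonneg (mul_pos hx0 hx1).le (by linarith : 0 ≤ x - 2 * lam)]
      _ = √2 * √(x * (x - 1) * (x - lam)) := sqrt_mul zero_le_two _
  have hpos : 0 < x * √(x - 1) / √2 := by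
    have := sqrt_pos.2 hx1
    positivity
  calc (√(x * (x - 1) * (x - lam)))⁻¹ ≤ (x * √(x - 1) / √2)⁻¹ :=
        inv_anti₀ hpos ((div_le_iff₀' (by positivity)).2 hle)
    _ = √2 * (x * √(x - 1))⁻¹ := by rw [inv_div, div_eq_mul_inv]

lemma sqrt_mul_sub_zero {x : ℝ} (hx : 0 ≤ x) : √(x * (x - 1) * (x - 0)) = x * √(x - 1) := by
  rw [sub_zero, show x * (x - 1) * x = x ^ 2 * (x - 1) by ring, sqrt_mul (sq_nonneg x), sqrt_sq hx]

lemma tendsto_integral_Ioi_inv_sqrt_mul_sub {u : ℝ} (hu : 1 ≤ u) :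
    Tendsto (fun lam => ∫ x in Ioi u, (√(x * (x - 1) * (x - lam)))⁻¹) (𝓝 0)
      (𝓝 (∫ x in Ioi u, (x * √(x - 1))⁻¹)) := by
  refine tendsto_integral_filter_of_dominated_convergence (fun x => √2 * (x * √(x - 1))⁻¹)
    (Eventually.of_forall fun _ => by fun_prop) ?_
    ((integrableOn_Ioi_inv_mul_sqrt_sub_one hu).const_mul _) ?_
  · filter_upwards [eventually_lt_nhds (one_half_pos : (0 : ℝ) < 1 / 2)] with lam hlam
    filter_upwards [ae_restrict_mem measurableSet_Ioi] with x hx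
    have hx1 : 1 < x := hu.trans_lt hx
    rw [norm_of_nonneg (by positivity)]
    exact inv_sqrt_mul_sub_le hx1 (by linarith)
  · filter_upwards [ae_restrict_mem measurableSet_Ioi] with x hx
    have hx1 : 1 < x := hu.trans_lt hx
    have hcont : ContinuousAt (fun lam => (√(x * (x - 1) * (x - lam)))⁻¹) 0 := by
      refine ContinuousAt.inv₀ (by fun_prop) (sqrt_pos.2 ?_).ne'
      rw [sub_zero]
      exact mul_pos (mul_pos (by linarith) (by linarith)) (by linarith)
    simpa only [sqrt_mul_sub_zero (zero_le_one.trans hx1.le)] using hcont.tendsto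

/-- The integral `∫_u^∞ dx/(x√(x−1))` equals `π − 2 arctan √(u−1)`, and the elliptic
integral `I_u(λ) = ∫_u^∞ dx/√(x(x−1)(x−λ))` tends to this value as `λ → 0⁺` along
`λ ∈ (0,1)`. -/
theorem elliptic_integral_limit (u : ℝ) (hu : 1 ≤ u) :
    (∫ x in Set.Ioi u, (x * Real.sqrt (x - 1))⁻¹) =
      Real.pi - 2 * Real.arctan (Real.sqrt (u - 1)) ∧
    Filter.Tendsto
      (fun lam : ℝ => ∫ x in Set.Ioi u, (Real.sqrt (x * (x - 1) * (x - lam)))⁻¹)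
      (nhdsWithin 0 (Set.Ioo 0 1))
      (nhds (Real.pi - 2 * Real.arctan (Real.sqrt (u - 1)))) := by
  rw [← integral_Ioi_inv_mul_sqrt_sub_one hu]
  exact ⟨rfl, (tendsto_integral_Ioi_inv_sqrt_mul_sub hu).mono_left nhdsWithin_le_nhds⟩
end

section
/- For every real number u > 1, the function λ ↦ I_u(λ)/I₁(λ) = (∫_u^∞ dx/√(x(x−1)(x−λ))) / (∫_1^∞ dx/√(x(x−1)(x−λ))) is strictly decreasing on the interval (0, 1). -/
/-!
For `λ₁ < λ₂` the ratio `f_{λ₂} / f_{λ₁} = √((x - λ₁) / (x - λ₂))` of the integrands is strictly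
decreasing in `x`. With `c` its value at `u`, `f_{λ₂} ≥ c f_{λ₁}` on `(1, u]` and
`f_{λ₂} < c f_{λ₁}` on `(u, ∞)`. Splitting `I₁ = ∫_1^u + I_u` and cross-multiplying, the claim
becomes `I_u(λ₂) ∫_1^u f_{λ₁} < I_u(λ₁) ∫_1^u f_{λ₂}`, the product of these two comparisons.
-/

open MeasureTheory Set

section SetIntegral

variable {X : Type*} [MeasurableSpace X] {μ : Measure X} {s t : Set X} {f g : X → ℝ}

lemma setIntegral_pos_of_forall_pos (hs : MeasurableSet s) (hμs : μ s ≠ 0)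
    (hf : IntegrableOn f s μ) (h : ∀ x ∈ s, 0 < f x) : 0 < ∫ x in s, f x ∂μ := by
  rw [setIntegral_pos_iff_support_of_nonneg_ae
      (ae_restrict_of_forall_mem hs fun x hx => (h x hx).le) hf,
    inter_eq_self_of_subset_right (show s ⊆ Function.support f from fun x hx => (h x hx).ne')]
  exact pos_iff_ne_zero.2 hμs

lemma setIntegral_lt_setIntegral_of_forall_lt (hs : MeasurableSet s) (hμs : μ s ≠ 0)
    (hf : IntegrableOn f s μ) (hg : IntegrableOn g s μ) (h : ∀ x ∈ s, f x < g x) :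
    ∫ x in s, f x ∂μ < ∫ x in s, g x ∂μ := by
  have := setIntegral_pos_of_forall_pos (f := fun x => g x - f x) hs hμs (hg.sub hf)
    fun x hx => sub_pos.2 (h x hx)
  rwa [integral_sub hg hf, sub_pos] at this

theorem setIntegral_div_setIntegral_union_lt {c : ℝ} (hs : MeasurableSet s)
    (ht : MeasurableSet t) (hst : Disjoint s t) (hμs : μ s ≠ 0) (hμt : μ t ≠ 0)
    (hf : IntegrableOn f (s ∪ t) μ) (hg : IntegrableOn g (s ∪ t) μ)
    (hf_pos : ∀ x ∈ s ∪ t, 0 < f x) (hg_nonneg : ∀ x ∈ t, 0 ≤ g x)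
    (hs_le : ∀ x ∈ s, c * f x ≤ g x) (ht_lt : ∀ x ∈ t, g x < c * f x) :
    (∫ x in t, g x ∂μ) / (∫ x in s ∪ t, g x ∂μ) <
      (∫ x in t, f x ∂μ) / ∫ x in s ∪ t, f x ∂μ := by
  obtain ⟨hfs, hft⟩ := integrableOn_union.1 hf
  obtain ⟨hgs, hgt⟩ := integrableOn_union.1 hg
  rw [setIntegral_union hst ht hfs hft, setIntegral_union hst ht hgs hgt]
  have hFs : 0 < ∫ x in s, f x ∂μ :=
    setIntegral_pos_of_forall_pos hs hμs hfs fun x hx => hf_pos x (.inl hx)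
  have hFt : 0 < ∫ x in t, f x ∂μ :=
    setIntegral_pos_of_forall_pos ht hμt hft fun x hx => hf_pos x (.inr hx)
  have hGt : 0 ≤ ∫ x in t, g x ∂μ := setIntegral_nonneg ht hg_nonneg
  have hGs_ge : c * ∫ x in s, f x ∂μ ≤ ∫ x in s, g x ∂μ := by
    rw [← integral_const_mul]
    exact setIntegral_mono_on (hfs.const_mul c) hgs hs hs_le
  have hGt_lt : ∫ x in t, g x ∂μ < c * ∫ x in t, f x ∂μ := by
    rw [← integral_const_mul]
    exact setIntegral_lt_setIntegral_of_forall_lt ht hμt hgt (hft.const_mul c) ht_lt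
  have key : (∫ x in t, g x ∂μ) * (∫ x in s, f x ∂μ) <
      (∫ x in t, f x ∂μ) * ∫ x in s, g x ∂μ :=
    calc (∫ x in t, g x ∂μ) * (∫ x in s, f x ∂μ)
        < (c * ∫ x in t, f x ∂μ) * ∫ x in s, f x ∂μ := mul_lt_mul_of_pos_right hGt_lt hFs
      _ = (∫ x in t, f x ∂μ) * (c * ∫ x in s, f x ∂μ) := by ring
      _ ≤ (∫ x in t, f x ∂μ) * ∫ x in s, g x ∂μ := mul_le_mul_of_nonneg_left hGs_ge hFt.le
  have hGs : 0 < ∫ x in s, g x ∂μ := by nlinarith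
  rw [div_lt_div_iff₀ (by positivity) (by positivity)]
  linarith

end SetIntegral

lemma integrableOn_rpow_sub_Ioc {r : ℝ} (hr : -1 < r) (a b : ℝ) :
    IntegrableOn (fun x => (x - a) ^ r) (Ioc a b) := by
  have h := (intervalIntegral.intervalIntegrable_rpow' hr (a := 0) (b := b - a)).comp_sub_right a
  simp only [zero_add, sub_add_cancel] at h
  exact (intervalIntegrable_iff.1 h).mono_set Ioc_subset_uIoc

noncomputable def ellipticIntegrand (lam x : ℝ) : ℝ := (√(x * (x - 1) * (x - lam)))⁻¹

section EllipticIntegrand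

variable {lam x : ℝ}

lemma measurable_ellipticIntegrand (lam : ℝ) : Measurable (ellipticIntegrand lam) := by
  unfold ellipticIntegrand
  fun_prop

lemma ellipticIntegrand_nonneg (lam x : ℝ) : 0 ≤ ellipticIntegrand lam x := by
  unfold ellipticIntegrand
  positivity

lemma ellipticIntegrand_pos (hx : 1 < x) (hlx : lam < x) : 0 < ellipticIntegrand lam x :=
  inv_pos.2 <| Real.sqrt_pos.2 <| mul_pos (mul_pos (by linarith) (by linarith)) (by linarith)

lemma ellipticIntegrand_le_of_one_lt (hl : lam < 1) (hx : 1 < x) :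
    ellipticIntegrand lam x ≤ (√(1 - lam))⁻¹ * (x - 1) ^ (-(1 / 2) : ℝ) := by
  have hx₁ : 0 < x - 1 := sub_pos.2 hx
  rw [Real.rpow_neg hx₁.le, ← Real.sqrt_eq_rpow, ← mul_inv, ← Real.sqrt_mul (by linarith)]
  refine inv_anti₀ (Real.sqrt_pos.2 (mul_pos (by linarith) hx₁)) (Real.sqrt_le_sqrt ?_)
  nlinarith [mul_pos (mul_pos hx₁ hx₁) (show 0 < x + 1 - lam by linarith)]

lemma ellipticIntegrand_le_of_two_le (hl : lam < 1) (hx : 2 ≤ x) :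
    ellipticIntegrand lam x ≤ 2 * x ^ (-(3 / 2) : ℝ) := by
  have hx₀ : 0 < x := by linarith
  have h : 2 * x ^ (-(3 / 2) : ℝ) = (√(x ^ 3 / 4))⁻¹ := by
    rw [Real.sqrt_div' _ (by norm_num), show (4 : ℝ) = 2 ^ 2 by norm_num,
      Real.sqrt_sq zero_le_two, Real.sqrt_eq_rpow, ← Real.rpow_natCast, ← Real.rpow_mul hx₀.le,
      Real.rpow_neg hx₀.le]
    norm_num
    ring
  have hcube : x * (x / 2 * (x / 2)) ≤ x * ((x - 1) * (x - lam)) :=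
    mul_le_mul_of_nonneg_left (mul_le_mul (by linarith) (by linarith) (by positivity) (by linarith))
      hx₀.le
  rw [h]
  exact inv_anti₀ (by positivity) (Real.sqrt_le_sqrt (by linarith))

lemma integrableOn_ellipticIntegrand (hl : lam < 1) :
    IntegrableOn (ellipticIntegrand lam) (Ioi 1) := by
  rw [← Ioc_union_Ioi_eq_Ioi one_le_two]
  refine IntegrableOn.union ?_ ?_
  · refine ((integrableOn_rpow_sub_Ioc (r := -(1 / 2)) (by norm_num) 1 2).const_mul
      (√(1 - lam))⁻¹).mono'
      (measurable_ellipticIntegrand lam).aestronglyMeasurable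
      (ae_restrict_of_forall_mem measurableSet_Ioc fun x hx => ?_)
    rw [Real.norm_of_nonneg (ellipticIntegrand_nonneg lam x)]
    exact ellipticIntegrand_le_of_one_lt hl hx.1
  · refine ((integrableOn_Ioi_rpow_of_lt (a := -(3 / 2)) (by norm_num) two_pos).const_mul 2).mono'
      (measurable_ellipticIntegrand lam).aestronglyMeasurable
      (ae_restrict_of_forall_mem measurableSet_Ioi fun x hx => ?_)
    rw [Real.norm_of_nonneg (ellipticIntegrand_nonneg lam x)]
    exact ellipticIntegrand_le_of_two_le hl hx.le

lemma ellipticIntegrand_div_ellipticIntegrand {lam₁ lam₂ : ℝ} (hx : 1 < x) (hl₁ : lam₁ ≤ x) :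
    ellipticIntegrand lam₂ x / ellipticIntegrand lam₁ x = √((x - lam₁) / (x - lam₂)) := by
  unfold ellipticIntegrand
  rw [inv_div_inv, ← Real.sqrt_div (mul_nonneg (by positivity) (by linarith)),
    mul_div_mul_left _ _ (by positivity)]

end EllipticIntegrand

lemma strictAntiOn_sub_div_sub {a b : ℝ} (h : a < b) :
    StrictAntiOn (fun t => (t - a) / (t - b)) (Ioi b) := by
  intro x hx y hy hxy
  simp only [mem_Ioi] at hx hy
  rw [div_lt_div_iff₀ (by linarith) (by linarith)]
  nlinarith

lemma strictAntiOn_ellipticIntegrand_div_ellipticIntegrand {lam₁ lam₂ : ℝ} (hlt : lam₁ < lam₂)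
    (hl₂ : lam₂ < 1) :
    StrictAntiOn (fun x => ellipticIntegrand lam₂ x / ellipticIntegrand lam₁ x) (Ioi 1) := by
  intro x hx y hy hxy
  simp only [mem_Ioi] at hx hy
  dsimp only
  rw [ellipticIntegrand_div_ellipticIntegrand hx (by linarith),
    ellipticIntegrand_div_ellipticIntegrand hy (by linarith)]
  exact Real.sqrt_lt_sqrt (div_nonneg (by linarith) (by linarith))
    (strictAntiOn_sub_div_sub hlt (mem_Ioi.2 (by linarith)) (mem_Ioi.2 (by linarith)) hxy)

/-- For `u > 1`, the ratio `I_u(λ)/I₁(λ)` of the elliptic integrals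
`I_v(λ) = ∫_v^∞ dx/√(x(x−1)(x−λ))` is strictly decreasing for `λ ∈ (0, 1)`. -/
theorem elliptic_integral_ratio_strictAnti (u : ℝ) (hu : 1 < u) :
    StrictAntiOn (fun lam : ℝ =>
      (∫ x in Set.Ioi u, (Real.sqrt (x * (x - 1) * (x - lam)))⁻¹) /
      (∫ x in Set.Ioi (1 : ℝ), (Real.sqrt (x * (x - 1) * (x - lam)))⁻¹))
      (Set.Ioo 0 1) := by
  intro lam₁ hlam₁ lam₂ hlam₂ hlt
  have hratio := strictAntiOn_ellipticIntegrand_div_ellipticIntegrand hlt hlam₂.2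
  have hpos {lam : ℝ} (hl : lam < 1) (x : ℝ) (hx : x ∈ Ioi 1) : 0 < ellipticIntegrand lam x :=
    ellipticIntegrand_pos hx (hl.trans hx)
  change (∫ x in Ioi u, ellipticIntegrand lam₂ x) / (∫ x in Ioi 1, ellipticIntegrand lam₂ x) <
    (∫ x in Ioi u, ellipticIntegrand lam₁ x) / ∫ x in Ioi 1, ellipticIntegrand lam₁ x
  have hunion : Ioc 1 u ∪ Ioi u = Ioi 1 := Ioc_union_Ioi_eq_Ioi hu.le
  rw [← hunion]
  refine setIntegral_div_setIntegral_union_lt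
    (c := ellipticIntegrand lam₂ u / ellipticIntegrand lam₁ u)
    measurableSet_Ioc measurableSet_Ioi (Ioc_disjoint_Ioi le_rfl) (by simpa using hu) (by simp)
    (hunion ▸ integrableOn_ellipticIntegrand hlam₁.2)
    (hunion ▸ integrableOn_ellipticIntegrand hlam₂.2) (hunion ▸ hpos hlam₁.2)
    (fun x _ => ellipticIntegrand_nonneg lam₂ x) ?_ ?_
  · intro x hx
    exact (le_div_iff₀ (hpos hlam₁.2 x hx.1)).1 (hratio.antitoneOn hx.1 hu hx.2)
  · intro x hx
    exact (div_lt_iff₀ (hpos hlam₁.2 x (hu.trans hx))).1 (hratio hu (hu.trans hx) hx)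
end

section
/- Let d ≥ 1, R > 0 and c ≥ 1, and let U ⊂ ℝ^d be the open ball of radius R centered at 0. Let f : U → ℝ^d be a continuous map which is differentiable at every point x with ‖x‖ ≤ R/2, such that: (i) for every x with ‖x‖ ≤ R/2, the derivative Df(x) is an invertible linear map with operator norm ‖Df(x)⁻¹‖ ≤ c; and (ii) for all x, y ∈ ℝ^d with ‖x‖ ≤ R/2 and ‖x + y‖ ≤ R/2, one has ‖f(x+y) − f(x) − Df(x)·y‖ ≤ ‖y‖/(2c²). Then the open ball of radius R/(4c) centered at f(0) is contained in f(U); in fact, for every v ∈ ℝ^d with ‖v − f(0)‖ < R/(4c) there exists x with ‖x‖ ≤ R/2 and f(x) = v. -/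
/-!
Newton's method: starting from `x₀ = 0`, put `xₙ₊₁ = xₙ + Df(xₙ)⁻¹ (v - f xₙ)`. Since
`Df(xₙ) (xₙ₊₁ - xₙ) = v - f xₙ`, an approximation error of at most `ε ‖y‖` contracts the
residual, `‖v - f xₙ₊₁‖ ≤ ε ‖xₙ₊₁ - xₙ‖ ≤ c ε ‖v - f xₙ‖`, so the steps decay geometrically
with ratio `q = c ε`, the iterates stay in the ball of radius `c ‖v - f 0‖ / (1 - q)`, and
their limit solves `f x = v` by continuity. For `ε = 1 / (2c²)` and `c ≥ 1` we have
`q ≤ 1/2`, so `‖v - f 0‖ < R / (4c)` keeps the iterates in the ball of radius `R / 2`.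
-/

open Filter Topology

theorem le_of_one_sub_mul_le_mul_one_sub_pow {a b q r : ℝ} {m : ℕ} (hq0 : 0 ≤ q) (hq : q < 1)
    (hb : 0 ≤ b) (ha : (1 - q) * a ≤ b * (1 - q ^ m)) (hbr : b ≤ (1 - q) * r) : a ≤ r := by
  have hqm : 0 ≤ q ^ m := pow_nonneg hq0 m
  refine le_of_mul_le_mul_left ?_ (sub_pos.mpr hq)
  nlinarith

section Newton

variable {E F : Type*} [NormedAddCommGroup E] [NormedSpace ℝ E]
  [NormedAddCommGroup F] [NormedSpace ℝ F]

def newtonIter (f : E → F) (f' : E → E ≃L[ℝ] F) (v : F) : ℕ → E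
  | 0 => 0
  | n + 1 =>
    let x := newtonIter f f' v n
    x + (f' x).symm (v - f x)

variable {f : E → F} {f' : E → E ≃L[ℝ] F} {v : F} {r c ε : ℝ}

@[simp]
theorem newtonIter_zero : newtonIter f f' v 0 = 0 := rfl

theorem newtonIter_succ (n : ℕ) :
    newtonIter f f' v (n + 1) =
      newtonIter f f' v n + (f' (newtonIter f f' v n)).symm (v - f (newtonIter f f' v n)) :=
  rfl

theorem norm_newton_step_le {x : E} (hcx : ‖((f' x).symm : F →L[ℝ] E)‖ ≤ c) :
    ‖(f' x).symm (v - f x)‖ ≤ c * ‖v - f x‖ :=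
  (((f' x).symm : F →L[ℝ] E).le_opNorm _).trans (by gcongr)

theorem norm_sub_apply_newton_step_le {x : E} (hx : ‖x‖ ≤ r)
    (hstep : ‖x + (f' x).symm (v - f x)‖ ≤ r)
    (happrox : ∀ x y : E, ‖x‖ ≤ r → ‖x + y‖ ≤ r → ‖f (x + y) - f x - f' x y‖ ≤ ε * ‖y‖) :
    ‖v - f (x + (f' x).symm (v - f x))‖ ≤ ε * ‖(f' x).symm (v - f x)‖ := by
  have hres : v - f (x + (f' x).symm (v - f x)) =
      -(f (x + (f' x).symm (v - f x)) - f x - f' x ((f' x).symm (v - f x))) := by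
    rw [ContinuousLinearEquiv.apply_symm_apply]; abel
  rw [hres, norm_neg]
  exact happrox x _ hx hstep

section Invariant

variable (hinv : ∀ x : E, ‖x‖ ≤ r → ‖((f' x).symm : F →L[ℝ] E)‖ ≤ c)
  (happrox : ∀ x y : E, ‖x‖ ≤ r → ‖x + y‖ ≤ r → ‖f (x + y) - f x - f' x y‖ ≤ ε * ‖y‖)
  (hc : 0 ≤ c) (hε : 0 ≤ ε) (hq : c * ε < 1)
  (hv : c * ‖v - f 0‖ ≤ (1 - c * ε) * r)

include hinv happrox hc hε hq hv

theorem newtonIter_invariant (n : ℕ) :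
    (1 - c * ε) * ‖newtonIter f f' v n‖ ≤ c * ‖v - f 0‖ * (1 - (c * ε) ^ n) ∧
      ‖v - f (newtonIter f f' v n)‖ ≤ ‖v - f 0‖ * (c * ε) ^ n := by
  have hball : ∀ {z : E} {m : ℕ},
      (1 - c * ε) * ‖z‖ ≤ c * ‖v - f 0‖ * (1 - (c * ε) ^ m) → ‖z‖ ≤ r := fun hz =>
    le_of_one_sub_mul_le_mul_one_sub_pow (mul_nonneg hc hε) hq
      (mul_nonneg hc (norm_nonneg _)) hz hv
  induction n with
  | zero => simp
  | succ n ih =>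
    obtain ⟨hxn, hres⟩ := ih
    set x := newtonIter f f' v n
    have hy : ‖(f' x).symm (v - f x)‖ ≤ c * ‖v - f 0‖ * (c * ε) ^ n :=
      (norm_newton_step_le (hinv x (hball hxn))).trans (by rw [mul_assoc]; gcongr)
    have hxn' : (1 - c * ε) * ‖newtonIter f f' v (n + 1)‖ ≤
        c * ‖v - f 0‖ * (1 - (c * ε) ^ (n + 1)) :=
      calc (1 - c * ε) * ‖newtonIter f f' v (n + 1)‖
          ≤ (1 - c * ε) * (‖x‖ + ‖(f' x).symm (v - f x)‖) := by
            rw [newtonIter_succ]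
            exact mul_le_mul_of_nonneg_left (norm_add_le _ _) (by linarith)
        _ ≤ c * ‖v - f 0‖ * (1 - (c * ε) ^ n) + (1 - c * ε) * (c * ‖v - f 0‖ * (c * ε) ^ n) := by
            rw [mul_add]; gcongr
        _ = c * ‖v - f 0‖ * (1 - (c * ε) ^ (n + 1)) := by ring
    refine ⟨hxn', ?_⟩
    calc ‖v - f (newtonIter f f' v (n + 1))‖
        ≤ ε * ‖(f' x).symm (v - f x)‖ :=
          norm_sub_apply_newton_step_le (hball hxn) (hball hxn') happrox
      _ ≤ ε * (c * ‖v - f 0‖ * (c * ε) ^ n) := by gcongr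
      _ = ‖v - f 0‖ * (c * ε) ^ (n + 1) := by ring

theorem norm_newtonIter_le (n : ℕ) : ‖newtonIter f f' v n‖ ≤ r :=
  le_of_one_sub_mul_le_mul_one_sub_pow (mul_nonneg hc hε) hq (mul_nonneg hc (norm_nonneg _))
    (newtonIter_invariant hinv happrox hc hε hq hv n).1 hv

theorem cauchySeq_newtonIter : CauchySeq (newtonIter f f' v) := by
  refine cauchySeq_of_le_geometric (c * ε) (c * ‖v - f 0‖) hq fun n => ?_
  rw [dist_eq_norm, newtonIter_succ, sub_add_cancel_left, norm_neg, mul_assoc]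
  exact (norm_newton_step_le (hinv _ (norm_newtonIter_le hinv happrox hc hε hq hv n))).trans
    (by gcongr; exact (newtonIter_invariant hinv happrox hc hε hq hv n).2)

theorem tendsto_apply_newtonIter : Tendsto (fun n => f (newtonIter f f' v n)) atTop (𝓝 v) := by
  rw [tendsto_iff_norm_sub_tendsto_zero]
  refine squeeze_zero (fun _ => norm_nonneg _) (fun n => ?_)
    (by simpa using
      (tendsto_pow_atTop_nhds_zero_of_lt_one (mul_nonneg hc hε) hq).const_mul (‖v - f 0‖))
  rw [norm_sub_rev]
  exact (newtonIter_invariant hinv happrox hc hε hq hv n).2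

theorem exists_norm_le_apply_eq_of_newton [CompleteSpace E]
    (hcont : ContinuousOn f (Metric.closedBall 0 r)) :
    ∃ x : E, ‖x‖ ≤ r ∧ f x = v := by
  obtain ⟨x, hx⟩ := cauchySeq_tendsto_of_complete (cauchySeq_newtonIter hinv happrox hc hε hq hv)
  have hmem : ∀ n, newtonIter f f' v n ∈ Metric.closedBall (0 : E) r := fun n => by
    simpa using norm_newtonIter_le hinv happrox hc hε hq hv n
  have hxr : x ∈ Metric.closedBall (0 : E) r :=
    Metric.isClosed_closedBall.mem_of_tendsto hx (Eventually.of_forall hmem)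
  have hfx : Tendsto (fun n => f (newtonIter f f' v n)) atTop (𝓝 (f x)) :=
    (hcont x hxr).tendsto.comp (tendsto_nhdsWithin_iff.mpr ⟨hx, Eventually.of_forall hmem⟩)
  exact ⟨x, by simpa using hxr,
    tendsto_nhds_unique hfx (tendsto_apply_newtonIter hinv happrox hc hε hq hv)⟩

end Invariant

end Newton

theorem quantitative_surjectivity_general (d : ℕ) (R c : ℝ)
    (hc : 1 ≤ c)
    (f : EuclideanSpace ℝ (Fin d) → EuclideanSpace ℝ (Fin d))
    (f' : EuclideanSpace ℝ (Fin d) → (EuclideanSpace ℝ (Fin d) ≃L[ℝ] EuclideanSpace ℝ (Fin d)))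
    (hcont : ContinuousOn f (Metric.ball 0 R))
    (hinv : ∀ x : EuclideanSpace ℝ (Fin d), ‖x‖ ≤ R / 2 →
      ‖((f' x).symm : EuclideanSpace ℝ (Fin d) →L[ℝ] EuclideanSpace ℝ (Fin d))‖ ≤ c)
    (happrox : ∀ x y : EuclideanSpace ℝ (Fin d), ‖x‖ ≤ R / 2 → ‖x + y‖ ≤ R / 2 →
      ‖f (x + y) - f x - f' x y‖ ≤ ‖y‖ / (2 * c ^ 2)) :
    Metric.ball (f 0) (R / (4 * c)) ⊆ f '' Metric.ball 0 R ∧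
    ∀ v : EuclideanSpace ℝ (Fin d), ‖v - f 0‖ < R / (4 * c) →
      ∃ x : EuclideanSpace ℝ (Fin d), ‖x‖ ≤ R / 2 ∧ f x = v := by
  have hc0 : 0 < c := one_pos.trans_le hc
  have hsolve : ∀ v, ‖v - f 0‖ < R / (4 * c) → ∃ x, ‖x‖ ≤ R / 2 ∧ f x = v := by
    intro v hv
    have hcv : c * ‖v - f 0‖ < R / 4 := by
      rw [lt_div_iff₀ (by positivity)] at hv; linarith
    have hR : 0 < R := by linarith [mul_nonneg hc0.le (norm_nonneg (v - f 0))]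
    have hq : c * (1 / (2 * c ^ 2)) = 1 / (2 * c) := by field_simp
    have hq_le : 1 / (2 * c) ≤ 1 / 2 := by gcongr; linarith
    refine exists_norm_le_apply_eq_of_newton (ε := 1 / (2 * c ^ 2)) hinv
      (fun x y hx hxy => ?_) hc0.le (by positivity)
      (by rw [hq]; linarith) (by rw [hq]; nlinarith)
      (hcont.mono (Metric.closedBall_subset_ball (by linarith)))
    exact (happrox x y hx hxy).trans_eq (by ring)
  refine ⟨fun v hv => ?_, hsolve⟩
  obtain ⟨x, hx, hfx⟩ := hsolve v (by rwa [Metric.mem_ball, dist_eq_norm] at hv)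
  have hR : 0 < R := by
    have := Metric.nonempty_ball.mp ⟨v, hv⟩
    exact (div_pos_iff_of_pos_right (by positivity)).mp this
  exact ⟨x, by rw [mem_ball_zero_iff]; linarith, hfx⟩

/-- A quantitative inverse-function/open-mapping statement: if `f` is continuous on the
ball `U` of radius `R`, differentiable on the closed ball of radius `R/2` with
derivatives `Df(x) = f' x` invertible, `‖Df(x)⁻¹‖ ≤ c`, and with a uniform first-order
approximation error at most `‖y‖/(2c²)`, then `f(U)` contains the ball of radius
`R/(4c)` centered at `f 0`; in fact every such value is attained on the closed ball of
radius `R/2`. -/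
theorem quantitative_surjectivity (d : ℕ) (hd : 1 ≤ d) (R c : ℝ) (hR : 0 < R)
    (hc : 1 ≤ c)
    (f : EuclideanSpace ℝ (Fin d) → EuclideanSpace ℝ (Fin d))
    (f' : EuclideanSpace ℝ (Fin d) → (EuclideanSpace ℝ (Fin d) ≃L[ℝ] EuclideanSpace ℝ (Fin d)))
    (hcont : ContinuousOn f (Metric.ball 0 R))
    (hderiv : ∀ x : EuclideanSpace ℝ (Fin d), ‖x‖ ≤ R / 2 →
      HasFDerivAt f ((f' x : EuclideanSpace ℝ (Fin d) →L[ℝ] EuclideanSpace ℝ (Fin d))) x)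
    (hinv : ∀ x : EuclideanSpace ℝ (Fin d), ‖x‖ ≤ R / 2 →
      ‖((f' x).symm : EuclideanSpace ℝ (Fin d) →L[ℝ] EuclideanSpace ℝ (Fin d))‖ ≤ c)
    (happrox : ∀ x y : EuclideanSpace ℝ (Fin d), ‖x‖ ≤ R / 2 → ‖x + y‖ ≤ R / 2 →
      ‖f (x + y) - f x - f' x y‖ ≤ ‖y‖ / (2 * c ^ 2)) :
    Metric.ball (f 0) (R / (4 * c)) ⊆ f '' Metric.ball 0 R ∧
    ∀ v : EuclideanSpace ℝ (Fin d), ‖v - f 0‖ < R / (4 * c) →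
      ∃ x : EuclideanSpace ℝ (Fin d), ‖x‖ ≤ R / 2 ∧ f x = v :=
  quantitative_surjectivity_general d R c hc f f' hcont hinv happrox
end
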